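/- There exist positive constants c_7, c_8 and a constant c_9, not depending on θ, such that for all θ ∈ Θ_G satisfying P(A_ε(θ)) ≥ π_max + ε_7 (where A_ε(θ) is the set of points at distance ≥ ε from all component means), the population pseudo-log-likelihood satisfies L(θ) ≤ -c_7/λ_min(θ) - c_8 log λ_min(θ) + c_9; consequently L(θ) → -∞ as λ_min(θ) ↘ 0 along such θ. -/

import Mathlib

/-!
Write `Λ = λ_min(θ)`, `A = A_ε(θ)` and `c = (2π)^(-p/2)`. Every component density is at most
`c Λ^(-p/2)`, and on `A`, where `(x - μ_j)ᵀ Σ_j⁻¹ (x - μ_j) ≥ ε² / λ_max ≥ ε² / (γ Λ)`, at most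
`B = c Λ^(-p/2) e^(-ε²/(2γΛ))`. On `A` the noise posterior `π₀δ/ψ` is therefore at least
`π₀δ / (π₀δ + B)`, and `A` has mass `≥ π_max + ε₇`, so the noise constraint forces
`π₀δ ≤ (π_max/ε₇) B`. Hence `ψ ≤ (1 + π_max/ε₇) c Λ^(-p/2)` everywhere, with the extra factor
`e^(-ε²/(2γΛ))` on `A`; integrating `log ψ` gives
`L(θ) ≤ -(π_max + ε₇) ε² / (2γΛ) - (p/2) log Λ + const`.
-/
open Real Matrix Filter Topology MeasureTheory

/-- smallest eigenvalue (infimum of the spectrum) of a real matrix -/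
noncomputable def lamMin {p : ℕ} (A : Matrix (Fin p) (Fin p) ℝ) : ℝ := sInf (spectrum ℝ A)

/-- largest eigenvalue (supremum of the spectrum) of a real matrix -/
noncomputable def lamMax {p : ℕ} (A : Matrix (Fin p) (Fin p) ℝ) : ℝ := sSup (spectrum ℝ A)

/-- The `p`-dimensional Gaussian density with mean `μ` and covariance matrix `S`. -/
noncomputable def gauss {p : ℕ} (x μ : Fin p → ℝ) (S : Matrix (Fin p) (Fin p) ℝ) : ℝ :=
  (2 * π) ^ (-(p : ℝ) / 2) * S.det ^ (-(1 : ℝ) / 2) *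
    Real.exp (-((x - μ) ⬝ᵥ (S⁻¹ *ᵥ (x - μ))) / 2)

/-- parameter vector θ = (π₀, (π_j), (μ_j), (Σ_j)) of a Gaussian mixture with
improper uniform (noise) component -/
abbrev Param (p G : ℕ) :=
  ℝ × (Fin G → ℝ) × (Fin G → (Fin p → ℝ)) × (Fin G → Matrix (Fin p) (Fin p) ℝ)

/-- noise proportion π₀ -/
def pi0 {p G : ℕ} (θ : Param p G) : ℝ := θ.1

/-- mixture proportions π_j -/
def wt {p G : ℕ} (θ : Param p G) : Fin G → ℝ := θ.2.1

/-- component means μ_j -/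
def mean {p G : ℕ} (θ : Param p G) : Fin G → Fin p → ℝ := θ.2.2.1

/-- component covariance matrices Σ_j -/
def covm {p G : ℕ} (θ : Param p G) : Fin G → Matrix (Fin p) (Fin p) ℝ := θ.2.2.2

/-- the improper pseudo-density ψ_δ(x, θ) = π₀δ + Σ_j π_j φ(x; μ_j, Σ_j) -/
noncomputable def psi {p G : ℕ} (δ : ℝ) (θ : Param p G) (x : Fin p → ℝ) : ℝ :=
  pi0 θ * δ + ∑ j, wt θ j * gauss x (mean θ j) (covm θ j)

/-- λ_min(θ): smallest eigenvalue among all component covariances -/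
noncomputable def lamMinP {p G : ℕ} (θ : Param p G) : ℝ := ⨅ j, lamMin (covm θ j)

/-- λ_max(θ): largest eigenvalue among all component covariances -/
noncomputable def lamMaxP {p G : ℕ} (θ : Param p G) : ℝ := ⨆ j, lamMax (covm θ j)

/-- basic parameter constraints: proportions nonnegative summing to one,
positive definite covariances, eigenratio λ_max(θ)/λ_min(θ) ≤ γ -/
def baseOK {p G : ℕ} (γ : ℝ) (θ : Param p G) : Prop :=
  0 ≤ pi0 θ ∧ (∀ j, 0 ≤ wt θ j) ∧ pi0 θ + ∑ j, wt θ j = 1 ∧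
    (∀ j, (covm θ j).PosDef) ∧ lamMaxP θ ≤ γ * lamMinP θ

/-- the finite-sample constrained parameter space Θ (eigenratio bound and
estimated noise proportion (1/n) Σ_i τ₀(x_i, θ) ≤ π_max) -/
def ThetaN {p G n : ℕ} (δ γ πmax : ℝ) (x : Fin n → Fin p → ℝ) : Set (Param p G) :=
  {θ | baseOK γ θ ∧ (1 / n : ℝ) * ∑ i, pi0 θ * δ / psi δ θ (x i) ≤ πmax}

/-- the improper pseudo-log-likelihood l_n(θ) = (1/n) Σ_i log ψ_δ(x_i, θ) -/
noncomputable def ln {p G n : ℕ} (δ : ℝ) (x : Fin n → Fin p → ℝ) (θ : Param p G) : ℝ :=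
  (1 / n : ℝ) * ∑ i, Real.log (psi δ θ (x i))

/-- the population constrained parameter space Θ_G (noise constraint
E_P[π₀δ/ψ_δ(x,θ)] ≤ π_max, eigenratio constraint, and well-definedness of L) -/
def ThetaG {p : ℕ} (G : ℕ) (P : Measure (Fin p → ℝ)) (δ γ πmax : ℝ) : Set (Param p G) :=
  {θ | baseOK γ θ ∧ Integrable (fun x => Real.log (psi δ θ x)) P ∧
    ∫ x, pi0 θ * δ / psi δ θ x ∂P ≤ πmax}

/-- the population pseudo-log-likelihood L(θ) = E_P[log ψ_δ(x, θ)] -/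
noncomputable def LL {p G : ℕ} (P : Measure (Fin p → ℝ)) (δ : ℝ) (θ : Param p G) : ℝ :=
  ∫ x, Real.log (psi δ θ x) ∂P

/-- assumption A1: P puts mass < 1 - π_max on every set of G points -/
def A1 {p : ℕ} (P : Measure (Fin p → ℝ)) (πmax : ℝ) (G : ℕ) : Prop :=
  ∀ y : Fin G → Fin p → ℝ, P (Set.range y) < ENNReal.ofReal (1 - πmax)


section Spectrum

variable {p : ℕ} {S : Matrix (Fin p) (Fin p) ℝ}

lemma lamMin_le_of_mem_spectrum {t : ℝ} (ht : t ∈ spectrum ℝ S) : lamMin S ≤ t :=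
  csInf_le finite_real_spectrum.bddBelow ht

lemma le_lamMax_of_mem_spectrum {t : ℝ} (ht : t ∈ spectrum ℝ S) : t ≤ lamMax S :=
  le_csSup finite_real_spectrum.bddAbove ht

lemma Matrix.PosDef.pos_of_mem_spectrum (hS : S.PosDef) {t : ℝ} (ht : t ∈ spectrum ℝ S) :
    0 < t := by
  rw [hS.1.spectrum_real_eq_range_eigenvalues] at ht
  obtain ⟨i, rfl⟩ := ht
  exact hS.eigenvalues_pos i

lemma Matrix.PosDef.lamMin_nonneg (hS : S.PosDef) : 0 ≤ lamMin S :=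
  Real.sInf_nonneg fun _ ht => (hS.pos_of_mem_spectrum ht).le

lemma Matrix.PosDef.lamMin_pos (hp : 0 < p) (hS : S.PosDef) : 0 < lamMin S := by
  have : Nonempty (Fin p) := Fin.pos_iff_nonempty.mp hp
  have hne : (spectrum ℝ S).Nonempty := by
    rw [hS.1.spectrum_real_eq_range_eigenvalues]
    exact Set.range_nonempty _
  exact hS.pos_of_mem_spectrum (hne.csInf_mem finite_real_spectrum)

lemma Matrix.PosDef.lamMin_pow_le_det (hS : S.PosDef) : lamMin S ^ p ≤ S.det := by
  rw [hS.1.det_eq_prod_eigenvalues]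
  calc lamMin S ^ p = ∏ _i : Fin p, lamMin S := by simp
    _ ≤ ∏ i, hS.1.eigenvalues i :=
      Finset.prod_le_prod (fun _ _ => hS.lamMin_nonneg)
        fun i _ => lamMin_le_of_mem_spectrum (hS.1.eigenvalues_mem_spectrum_real i)
    _ = _ := by simp

/-- The eigenvalues `1/λ` of `S⁻¹` are all at least `1/Λ`, so `S⁻¹ - Λ⁻¹ • 1` is positive
semidefinite. -/
lemma Matrix.PosDef.inv_mul_dotProduct_self_le (hS : S.PosDef) {Λ : ℝ} (hΛ : lamMax S ≤ Λ)
    (v : Fin p → ℝ) : Λ⁻¹ * (v ⬝ᵥ v) ≤ v ⬝ᵥ (S⁻¹ *ᵥ v) := by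
  have hU : IsUnit S := hS.isUnit
  have hshift : (S⁻¹ - algebraMap ℝ _ Λ⁻¹).PosSemidef := by
    rw [posSemidef_iff_isHermitian_and_spectrum_nonneg]
    refine ⟨hS.inv.1.sub (IsSelfAdjoint.algebraMap _ (.all Λ⁻¹)), ?_⟩
    rw [← spectrum.sub_singleton_eq]
    rintro _ ⟨u, hu, _, rfl, rfl⟩
    have hu_pos : 0 < u := hS.inv.pos_of_mem_spectrum hu
    have hu_inv : u⁻¹ ∈ spectrum ℝ S := by
      rw [← hU.unit_spec, spectrum.inv₀_mem_iff, Matrix.coe_units_inv, hU.unit_spec]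
      exact hu
    have hΛ_le : Λ⁻¹ ≤ u⁻¹⁻¹ :=
      inv_anti₀ (inv_pos.mpr hu_pos) ((le_lamMax_of_mem_spectrum hu_inv).trans hΛ)
    exact sub_nonneg.mpr (by rwa [inv_inv] at hΛ_le)
  have h := hshift.dotProduct_mulVec_nonneg v
  simp only [star_trivial, Algebra.algebraMap_eq_smul_one, sub_mulVec, smul_mulVec, one_mulVec,
    dotProduct_sub, dotProduct_smul, smul_eq_mul] at h
  linarith

end Spectrum

section Gaussian

variable {p : ℕ} {S : Matrix (Fin p) (Fin p) ℝ}

lemma gauss_pos (hS : S.PosDef) (x μ : Fin p → ℝ) : 0 < gauss x μ S := by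
  unfold gauss
  have := hS.det_pos
  positivity

lemma gauss_le (hS : S.PosDef) {lam q : ℝ} (hlam : 0 < lam) (hmin : lam ≤ lamMin S)
    {x μ : Fin p → ℝ} (hq : q ≤ (x - μ) ⬝ᵥ (S⁻¹ *ᵥ (x - μ))) :
    gauss x μ S ≤ (2 * π) ^ (-(p : ℝ) / 2) * lam ^ (-(p : ℝ) / 2) * Real.exp (-q / 2) := by
  have hdet : lam ^ p ≤ S.det := (pow_le_pow_left₀ hlam.le hmin p).trans hS.lamMin_pow_le_det
  have hdet_rpow : S.det ^ (-(1 : ℝ) / 2) ≤ lam ^ (-(p : ℝ) / 2) := by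
    calc S.det ^ (-(1 : ℝ) / 2) ≤ (lam ^ p) ^ (-(1 : ℝ) / 2) :=
          Real.rpow_le_rpow_of_nonpos (pow_pos hlam p) hdet (by norm_num)
      _ = lam ^ (-(p : ℝ) / 2) := by
          rw [← Real.rpow_natCast, ← Real.rpow_mul hlam.le]
          ring_nf
  unfold gauss
  gcongr

lemma gauss_le_of_le_lamMin (hS : S.PosDef) {lam : ℝ} (hlam : 0 < lam) (hmin : lam ≤ lamMin S)
    (x μ : Fin p → ℝ) : gauss x μ S ≤ (2 * π) ^ (-(p : ℝ) / 2) * lam ^ (-(p : ℝ) / 2) := by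
  have hq := hS.inv.posSemidef.dotProduct_mulVec_nonneg (x - μ)
  rw [star_trivial] at hq
  simpa using gauss_le hS hlam hmin hq

lemma gauss_le_of_le_sqrt (hS : S.PosDef) {lam Λ ε : ℝ} (hlam : 0 < lam) (hmin : lam ≤ lamMin S)
    (hΛ : lamMax S ≤ Λ) (hΛ0 : 0 ≤ Λ) (hε : 0 ≤ ε) {x μ : Fin p → ℝ}
    (hx : ε ≤ Real.sqrt (∑ i, (x i - μ i) ^ 2)) :
    gauss x μ S ≤
      (2 * π) ^ (-(p : ℝ) / 2) * lam ^ (-(p : ℝ) / 2) * Real.exp (-(Λ⁻¹ * ε ^ 2) / 2) := by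
  refine gauss_le hS hlam hmin ?_
  have hdist : ε ^ 2 ≤ (x - μ) ⬝ᵥ (x - μ) := by
    rw [Real.le_sqrt hε (Finset.sum_nonneg fun i _ => sq_nonneg _)] at hx
    simpa [dotProduct, sq] using hx
  calc Λ⁻¹ * ε ^ 2 ≤ Λ⁻¹ * ((x - μ) ⬝ᵥ (x - μ)) := by gcongr
    _ ≤ _ := hS.inv_mul_dotProduct_self_le hΛ _

end Gaussian

/-- The set `A_ε(θ)` of the paper. -/
def farFromMeans {p G : ℕ} (ε : ℝ) (θ : Param p G) : Set (Fin p → ℝ) :=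
  {x | ∀ j, ε ≤ Real.sqrt (∑ i, (x i - mean θ j i) ^ 2)}

section Mixture

variable {p G : ℕ} {δ γ : ℝ} {θ : Param p G}

lemma measurableSet_farFromMeans (ε : ℝ) (θ : Param p G) :
    MeasurableSet (farFromMeans ε θ) := by
  have : farFromMeans ε θ =
      ⋂ j, (fun x => Real.sqrt (∑ i, (x i - mean θ j i) ^ 2)) ⁻¹' Set.Ici ε := by
    ext x; simp [farFromMeans]
  rw [this]
  exact MeasurableSet.iInter fun j =>
    (isClosed_Ici.preimage (by fun_prop)).measurableSet

lemma continuous_psi (δ : ℝ) (θ : Param p G) : Continuous (psi δ θ) := by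
  unfold psi gauss
  simp only [dotProduct, mulVec, Pi.sub_apply]
  fun_prop

lemma lamMinP_le_lamMin (θ : Param p G) (j : Fin G) : lamMinP θ ≤ lamMin (covm θ j) :=
  ciInf_le (Set.finite_range _).bddBelow j

lemma lamMax_le_lamMaxP (θ : Param p G) (j : Fin G) : lamMax (covm θ j) ≤ lamMaxP θ :=
  le_ciSup (f := fun j => lamMax (covm θ j)) (Set.finite_range _).bddAbove j

lemma lamMinP_pos (hp : 0 < p) (hG : 0 < G) (hθ : ∀ j, (covm θ j).PosDef) :
    0 < lamMinP θ := by
  have : Nonempty (Fin G) := Fin.pos_iff_nonempty.mp hG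
  obtain ⟨j, hj⟩ := Finite.exists_min fun j => lamMin (covm θ j)
  exact ((hθ j).lamMin_pos hp).trans_le (le_ciInf hj)

lemma pi0_mul_le_psi (hθ : baseOK γ θ) (x : Fin p → ℝ) : pi0 θ * δ ≤ psi δ θ x :=
  le_add_of_nonneg_right <| Finset.sum_nonneg fun j _ =>
    mul_nonneg (hθ.2.1 j) (gauss_pos (hθ.2.2.2.1 j) _ _).le

lemma psi_pos (hδ : 0 < δ) (hθ : baseOK γ θ) (x : Fin p → ℝ) : 0 < psi δ θ x := by
  have hgauss j := gauss_pos (hθ.2.2.2.1 j) x (mean θ j)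
  rcases hθ.1.lt_or_eq with hpi0 | hpi0
  · exact (mul_pos hpi0 hδ).trans_le (pi0_mul_le_psi hθ x)
  have hwt_sum : ∑ j, wt θ j = 1 := by simpa [← hpi0] using hθ.2.2.1
  obtain ⟨j, -, hj⟩ : ∃ j ∈ Finset.univ, (0 : Fin G → ℝ) j < wt θ j :=
    Finset.exists_lt_of_sum_lt (by simp [hwt_sum])
  unfold psi
  rw [← hpi0, zero_mul, zero_add]
  exact Finset.sum_pos' (fun j _ => mul_nonneg (hθ.2.1 j) (hgauss j).le)
    ⟨j, Finset.mem_univ _, mul_pos hj (hgauss j)⟩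

lemma psi_le_of_gauss_le (hθ : baseOK γ θ) {x : Fin p → ℝ} {M : ℝ} (hM : 0 ≤ M)
    (hgauss : ∀ j, gauss x (mean θ j) (covm θ j) ≤ M) : psi δ θ x ≤ pi0 θ * δ + M := by
  obtain ⟨hpi0, hwt, hsum, -, -⟩ := hθ
  calc psi δ θ x ≤ pi0 θ * δ + ∑ j, wt θ j * M := by
        unfold psi
        gcongr with j
        · exact hwt j
        · exact hgauss j
    _ ≤ pi0 θ * δ + M := by
        rw [← Finset.sum_mul]
        nlinarith

end Mixture

section Integral

variable {α : Type*} [MeasurableSpace α] {P : Measure α} {f : α → ℝ} {A : Set α}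

/-- The ratio `a / f` is at least `a / (a + b)` on a set of mass `≥ m + η`. -/
lemma mul_le_mul_of_integral_div_le [IsFiniteMeasure P] (hA : MeasurableSet A)
    (hf : Measurable f) {a b m η : ℝ} (ha : 0 ≤ a) (hb : 0 < b) (hf_pos : ∀ x, 0 < f x)
    (ha_le : ∀ x, a ≤ f x) (hf_le : ∀ x ∈ A, f x ≤ a + b) (hint : ∫ x, a / f x ∂P ≤ m)
    (hPA : m + η ≤ P.real A) : a * η ≤ m * b := by
  have hdiv_nonneg : ∀ x, 0 ≤ a / f x := fun x => div_nonneg ha (hf_pos x).le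
  have hdiv_int : Integrable (fun x => a / f x) P :=
    Integrable.mono' (integrable_const 1) (measurable_const.div hf).aestronglyMeasurable
      (ae_of_all _ fun x => by
        rw [Real.norm_of_nonneg (hdiv_nonneg x)]
        exact div_le_one_of_le₀ (ha_le x) (hf_pos x).le)
  have hab : 0 < a + b := by linarith
  have hmass : a / (a + b) * (m + η) ≤ m :=
    calc a / (a + b) * (m + η) ≤ P.real A * (a / (a + b)) := by
          rw [mul_comm]; gcongr
      _ = ∫ x in A, a / (a + b) ∂P := by rw [setIntegral_const, smul_eq_mul]
      _ ≤ ∫ x in A, a / f x ∂P :=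
          setIntegral_mono_on (integrable_const _).integrableOn hdiv_int.integrableOn hA
            fun x hx => div_le_div_of_nonneg_left ha (hf_pos x) (hf_le x hx)
      _ ≤ ∫ x, a / f x ∂P := setIntegral_le_integral hdiv_int (ae_of_all _ hdiv_nonneg)
      _ ≤ m := hint
  rw [div_mul_eq_mul_div, div_le_iff₀ hab] at hmass
  linarith

lemma integral_le_add_mul_of_le_of_le_on [IsProbabilityMeasure P] (hA : MeasurableSet A)
    (hf : Integrable f P) {u e s : ℝ} (he : e ≤ 0) (hs : s ≤ P.real A) (hle : ∀ x, f x ≤ u)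
    (hleA : ∀ x ∈ A, f x ≤ u + e) : ∫ x, f x ∂P ≤ u + s * e := by
  have hbound : ∀ x, f x ≤ u + A.indicator (fun _ => e) x := by
    intro x
    by_cases hx : x ∈ A
    · simpa [hx] using hleA x hx
    · simpa [hx] using hle x
  calc ∫ x, f x ∂P ≤ ∫ x, (u + A.indicator (fun _ => e) x) ∂P :=
        integral_mono hf ((integrable_const u).add ((integrable_const e).indicator hA)) hbound
    _ = u + P.real A * e := by
        rw [integral_add (integrable_const u) ((integrable_const e).indicator hA),
          integral_const, integral_indicator_const e hA]
        simp
    _ ≤ u + s * e := by linarith [mul_le_mul_of_nonpos_right hs he]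

end Integral

section NoiseConstraint

variable {p G : ℕ} {P : Measure (Fin p → ℝ)} {δ γ πmax ε7 : ℝ} {θ : Param p G}

lemma pi0_mul_mul_le_of_gauss_le [IsProbabilityMeasure P] (hδ : 0 < δ)
    (hθ : θ ∈ ThetaG G P δ γ πmax) {A : Set (Fin p → ℝ)} (hA : MeasurableSet A) {B : ℝ}
    (hB : 0 < B) (hgauss : ∀ x ∈ A, ∀ j, gauss x (mean θ j) (covm θ j) ≤ B)
    (hPA : πmax + ε7 ≤ P.real A) : pi0 θ * δ * ε7 ≤ πmax * B :=
  mul_le_mul_of_integral_div_le hA (continuous_psi δ θ).measurable (mul_nonneg hθ.1.1 hδ.le) hB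
    (psi_pos hδ hθ.1) (pi0_mul_le_psi hθ.1)
    (fun x hx => psi_le_of_gauss_le hθ.1 hB.le (hgauss x hx)) hθ.2.2 hPA

lemma psi_le_one_add_div_mul (hθ : baseOK γ θ) (hπ : 0 ≤ πmax) (hε7 : 0 < ε7) {B M : ℝ}
    (hnoise : pi0 θ * δ * ε7 ≤ πmax * B) (hB : 0 ≤ B) (hBM : B ≤ M) {x : Fin p → ℝ}
    (hgauss : ∀ j, gauss x (mean θ j) (covm θ j) ≤ M) :
    psi δ θ x ≤ (1 + πmax / ε7) * M := by
  have hpsi := psi_le_of_gauss_le (δ := δ) hθ (hB.trans hBM) hgauss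
  have hpi0 : pi0 θ * δ ≤ πmax / ε7 * M := by
    rw [div_mul_eq_mul_div, le_div_iff₀ hε7]
    exact hnoise.trans (mul_le_mul_of_nonneg_left hBM hπ)
  linarith

end NoiseConstraint

theorem LL_le_of_mem_ThetaG {p G : ℕ} (hp : 0 < p) (hG : 0 < G) {P : Measure (Fin p → ℝ)}
    [IsProbabilityMeasure P] {δ γ πmax ε ε7 : ℝ} (hδ : 0 < δ) (hγ : 0 < γ) (hπ : 0 ≤ πmax)
    (hε : 0 ≤ ε) (hε7 : 0 < ε7) {θ : Param p G} (hθ : θ ∈ ThetaG G P δ γ πmax)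
    (hA : ENNReal.ofReal (πmax + ε7) ≤ P (farFromMeans ε θ)) :
    LL P δ θ ≤ -((πmax + ε7) * ε ^ 2 / (2 * γ)) / lamMinP θ - (p : ℝ) / 2 * Real.log (lamMinP θ)
      + (Real.log (1 + πmax / ε7) + Real.log ((2 * π) ^ (-(p : ℝ) / 2))) := by
  have hbase := hθ.1
  have hpos := hbase.2.2.2.1
  set Λ := lamMinP θ
  have hΛ : 0 < Λ := lamMinP_pos hp hG hpos
  set D := (2 * π) ^ (-(p : ℝ) / 2) * Λ ^ (-(p : ℝ) / 2)
  set e := -((γ * Λ)⁻¹ * ε ^ 2) / 2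
  have hD : 0 < D := by positivity
  have he : e ≤ 0 := by
    have : 0 ≤ (γ * Λ)⁻¹ * ε ^ 2 := by positivity
    simp only [e]; linarith
  have hgauss x j : gauss x (mean θ j) (covm θ j) ≤ D :=
    gauss_le_of_le_lamMin (hpos j) hΛ (lamMinP_le_lamMin θ j) x (mean θ j)
  have hgauss_far : ∀ x ∈ farFromMeans ε θ, ∀ j, gauss x (mean θ j) (covm θ j) ≤ D * exp e :=
    fun x hx j => gauss_le_of_le_sqrt (hpos j) hΛ (lamMinP_le_lamMin θ j)
      ((lamMax_le_lamMaxP θ j).trans hbase.2.2.2.2) (by positivity) hε (hx j)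
  have hPA : πmax + ε7 ≤ P.real (farFromMeans ε θ) := by
    rwa [measureReal_def, ← ENNReal.ofReal_le_iff_le_toReal (measure_ne_top _ _)]
  have hnoise_mass : pi0 θ * δ * ε7 ≤ πmax * (D * exp e) :=
    pi0_mul_mul_le_of_gauss_le hδ hθ (measurableSet_farFromMeans ε θ) (by positivity)
      hgauss_far hPA
  have hlog x : Real.log (psi δ θ x) ≤ Real.log ((1 + πmax / ε7) * D) :=
    Real.log_le_log (psi_pos hδ hbase x)
      (psi_le_one_add_div_mul hbase hπ hε7 hnoise_mass (by positivity)
        (mul_le_of_le_one_right hD.le (exp_le_one_iff.mpr he)) (hgauss x))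
  have hlog_far : ∀ x ∈ farFromMeans ε θ,
      Real.log (psi δ θ x) ≤ Real.log ((1 + πmax / ε7) * D) + e := fun x hx =>
    calc Real.log (psi δ θ x) ≤ Real.log ((1 + πmax / ε7) * (D * exp e)) :=
          Real.log_le_log (psi_pos hδ hbase x) (psi_le_one_add_div_mul hbase hπ hε7 hnoise_mass
            (by positivity) le_rfl (hgauss_far x hx))
      _ = Real.log ((1 + πmax / ε7) * D) + e := by
          rw [← mul_assoc, Real.log_mul (by positivity) (exp_pos e).ne', Real.log_exp]
  calc LL P δ θ ≤ Real.log ((1 + πmax / ε7) * D) + (πmax + ε7) * e :=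
        integral_le_add_mul_of_le_of_le_on (measurableSet_farFromMeans ε θ) hθ.2.1 he hPA hlog
          hlog_far
    _ = _ := by
        rw [Real.log_mul (by positivity) hD.ne', Real.log_mul (by positivity) (by positivity),
          Real.log_rpow hΛ]
        simp only [e]
        field_simp
        ring

lemma tendsto_neg_div_sub_mul_log_add_atBot {a : ℝ} (ha : 0 < a) (b c : ℝ) :
    Tendsto (fun t => -a / t - b * Real.log t + c) (𝓝[>] 0) atBot := by
  have hmul_log : Tendsto (fun t => a + b * (t * Real.log t)) (𝓝[>] 0) (𝓝 a) := by
    have h := (Real.continuous_mul_log.tendsto 0).mono_left (nhdsWithin_le_nhds (s := Set.Ioi 0))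
    simpa using (h.const_mul b).const_add a
  refine (tendsto_atBot_add_const_right _ c
    (tendsto_neg_atTop_atBot.comp (tendsto_inv_nhdsGT_zero.atTop_mul_pos ha hmul_log))).congr' ?_
  filter_upwards [self_mem_nhdsWithin] with t (ht : 0 < t)
  simp only [Function.comp_apply]
  field_simp
  ring

theorem stmt16_general {p G : ℕ} (hp : 0 < p) (hG : 0 < G)
    (P : Measure (Fin p → ℝ)) [IsProbabilityMeasure P]
    (δ γ πmax ε ε7 : ℝ) (hδ : 0 < δ) (hγ : 1 ≤ γ) (hπ0 : 0 < πmax)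
    (hε : 0 < ε) (hε7 : 0 < ε7) :
    ∃ c7 > (0 : ℝ), ∃ c8 > (0 : ℝ), ∃ c9 : ℝ,
      (∀ θ ∈ ThetaG G P δ γ πmax,
        ENNReal.ofReal (πmax + ε7) ≤
            P {x | ∀ j, ε ≤ Real.sqrt (∑ i, (x i - mean θ j i) ^ 2)} →
          LL P δ θ ≤ -c7 / lamMinP θ - c8 * Real.log (lamMinP θ) + c9) ∧
      (∀ θseq : ℕ → Param p G,
        (∀ m, θseq m ∈ ThetaG G P δ γ πmax ∧
          ENNReal.ofReal (πmax + ε7) ≤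
            P {x | ∀ j, ε ≤ Real.sqrt (∑ i, (x i - mean (θseq m) j i) ^ 2)}) →
        Tendsto (fun m => lamMinP (θseq m)) atTop (nhds 0) →
        Tendsto (fun m => LL P δ (θseq m)) atTop atBot) := by
  have hγ0 : 0 < γ := one_pos.trans_le hγ
  refine ⟨(πmax + ε7) * ε ^ 2 / (2 * γ), by positivity, (p : ℝ) / 2,
    div_pos (Nat.cast_pos.mpr hp) two_pos,
    Real.log (1 + πmax / ε7) + Real.log ((2 * π) ^ (-(p : ℝ) / 2)),
    fun θ hθ hA => LL_le_of_mem_ThetaG hp hG hδ hγ0 hπ0.le hε.le hε7 hθ hA,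
    fun θseq hθseq hlim => ?_⟩
  have hlim_pos : Tendsto (fun m => lamMinP (θseq m)) atTop (𝓝[>] 0) :=
    tendsto_nhdsWithin_of_tendsto_nhds_of_eventually_within _ hlim
      (Eventually.of_forall fun m => lamMinP_pos hp hG (hθseq m).1.1.2.2.2.1)
  exact tendsto_atBot_mono
    (fun m => LL_le_of_mem_ThetaG hp hG hδ hγ0 hπ0.le hε.le hε7 (hθseq m).1 (hθseq m).2)
    ((tendsto_neg_div_sub_mul_log_add_atBot (by positivity) _ _).comp hlim_pos)

/-- quantitative bound in the proof of Lemma 4: there are constants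
c₇, c₈ > 0 and c₉, not depending on θ, such that for all θ ∈ Θ_G with
P(A_ε(θ)) ≥ π_max + ε₇ one has L(θ) ≤ -c₇/λ_min(θ) - c₈ log λ_min(θ) + c₉;
consequently L(θ_m) → -∞ whenever λ_min(θ_m) ↘ 0 along such θ. -/
theorem stmt16 {p G : ℕ} (hp : 0 < p) (hG : 0 < G)
    (P : Measure (Fin p → ℝ)) [IsProbabilityMeasure P]
    (δ γ πmax ε ε7 : ℝ) (hδ : 0 < δ) (hγ : 1 ≤ γ) (hπ0 : 0 < πmax) (hπ1 : πmax < 1)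
    (hε : 0 < ε) (hε7 : 0 < ε7) :
    ∃ c7 > (0 : ℝ), ∃ c8 > (0 : ℝ), ∃ c9 : ℝ,
      (∀ θ ∈ ThetaG G P δ γ πmax,
        ENNReal.ofReal (πmax + ε7) ≤
            P {x | ∀ j, ε ≤ Real.sqrt (∑ i, (x i - mean θ j i) ^ 2)} →
          LL P δ θ ≤ -c7 / lamMinP θ - c8 * Real.log (lamMinP θ) + c9) ∧
      (∀ θseq : ℕ → Param p G,
        (∀ m, θseq m ∈ ThetaG G P δ γ πmax ∧
          ENNReal.ofReal (πmax + ε7) ≤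
            P {x | ∀ j, ε ≤ Real.sqrt (∑ i, (x i - mean (θseq m) j i) ^ 2)}) →
        Tendsto (fun m => lamMinP (θseq m)) atTop (nhds 0) →
        Tendsto (fun m => LL P δ (θseq m)) atTop atBot) :=
  stmt16_general hp hG P δ γ πmax ε ε7 hδ hγ hπ0 hε hε7
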